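/- If a natural number belongs to V, every member of V is a natural number, V ⊆ S, and S is a natural number, then ⋃V is the greatest natural number in V: ⋃V ∈ V and for every u ∈ V, ⋃V ∉ u. -/

import Mathlib

/-!
Take an `∈`-minimal upper bound `w` of `V` in `S ∪ {S}`; regularity applies because an upper
bound of `V` is not self-membered, `V` having a number as a member. As a member of `S ∪ {S}`,
`w` is either `α` or a successor `U ∪ {U}` (it cannot lie in `α`, whose members are
self-membered). If `w = α`, the number `n ∈ V` is not in `α`, so `n = w`. If `w = U ∪ {U}` and
`w ∉ V`, then every member of `V` lies in `w`, hence `U` would be a smaller upper bound. So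
`w ∈ V`, and since members of `S ∪ {S}` are transitive, `w` is greatest in `V` and `w = ⋃V`.
-/

/-- Extensional equality of objects: `s = t` iff they have the same members. -/
def eqE {Obj : Type} (mem : Obj → Obj → Prop) (s t : Obj) : Prop :=
  ∀ u, mem u s ↔ mem u t

/-- Inclusion: `a ⊆ b`. -/
def subE {Obj : Type} (mem : Obj → Obj → Prop) (a b : Obj) : Prop :=
  ∀ u, mem u a → mem u b

/-- `w` is the union `⋃ s`. -/
def isUnionOf {Obj : Type} (mem : Obj → Obj → Prop) (w s : Obj) : Prop :=
  ∀ u, mem u w ↔ ∃ z, mem z s ∧ mem u z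

/-- `t` is the successor `s ∪ {s}` of `s` (membership expressed directly). -/
def isSuccOf {Obj : Type} (mem : Obj → Obj → Prop) (t s : Obj) : Prop :=
  ∀ u, mem u t ↔ (mem u s ∨ eqE mem u s)

/-- `S` is an ordinal number with first number `α`:  `S ∉ α` and every
`X ∈ S ∪ {S}` satisfies `X ∈ α ∪ {α}` or (`α ∈ X` and `X = ⋃X ∪ {⋃X}`). -/
def isNat {Obj : Type} (mem : Obj → Obj → Prop) (α S : Obj) : Prop :=
  ¬ mem S α ∧
  ∀ X, (mem X S ∨ eqE mem X S) →
    (mem X α ∨ eqE mem X α) ∨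
    (mem α X ∧ ∃ U, isUnionOf mem U X ∧ isSuccOf mem X U)

section

variable {Obj : Type} (mem : Obj → Obj → Prop)

def isTransitive (X : Obj) : Prop :=
  ∀ z, mem z X → ∀ x, mem x z → mem x X

def isUpperBound (V u : Obj) : Prop :=
  ∀ v, mem v V → mem v u ∨ eqE mem v u

variable {mem}

theorem eqE_refl (s : Obj) : eqE mem s s := fun _ => Iff.rfl

theorem eqE_symm {s t : Obj} (h : eqE mem s t) : eqE mem t s := fun u => (h u).symm

theorem mem_self_of_mem_pair (subst : ∀ s t v, eqE mem s t → mem t v → mem s v)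
    {p q α : Obj} (hp : mem p p) (hq : mem q q)
    (hα : ∀ u, mem u α ↔ (eqE mem u p ∨ eqE mem u q)) {x : Obj} (hx : mem x α) : mem x x := by
  rcases (hα x).1 hx with h | h
  · exact (h x).2 (subst x p p h hp)
  · exact (h x).2 (subst x q q h hq)

theorem not_mem_self_of_isNat (subst : ∀ s t v, eqE mem s t → mem t v → mem s v)
    (indiv : ∀ p s, mem s p → mem p p → eqE mem s p)
    {a α n : Obj} (ha : mem a α) (hn : isNat mem α n) : ¬ mem n n := by
  intro hnn
  -- a self-membered `n` swallows every member: `a = n`, whence `n ∈ α`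
  have hα_sub : subE mem α n → False := fun h =>
    hn.1 (subst n a α (eqE_symm (indiv n a (h a ha) hnn)) ha)
  rcases hn.2 n (Or.inr (eqE_refl n)) with (h | h) | ⟨hαn, -⟩
  · exact hn.1 h
  · exact hα_sub fun u => (h u).2
  · exact hα_sub fun u => (indiv n α hαn hnn u).1

theorem isTransitive_of_mem_succ_of_isNat (subst : ∀ s t v, eqE mem s t → mem t v → mem s v)
    (indiv : ∀ p s, mem s p → mem p p → eqE mem s p)
    {α S X : Obj} (hα : ∀ x, mem x α → mem x x) (hS : isNat mem α S)
    (hX : mem X S ∨ eqE mem X S) : isTransitive mem X := by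
  intro z hzX x hxz
  rcases hS.2 X hX with (hXα | hXα) | ⟨-, U, hU, hsucc⟩
  · exact (indiv X z hzX (hα X hXα) x).1 hxz
  · exact subst x z X (indiv z x hxz (hα z ((hXα z).1 hzX))) hzX
  · exact (hsucc x).2 (Or.inl ((hU x).2 ⟨z, hzX, hxz⟩))

theorem exists_isSuccOf (pairing : ∀ s t, ∃ v, ∀ u, mem u v ↔ (eqE mem u s ∨ eqE mem u t))
    (union : ∀ s, ∃ v, isUnionOf mem v s) (S : Obj) : ∃ W, isSuccOf mem W S := by
  obtain ⟨T, hT⟩ := pairing S S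
  obtain ⟨P, hP⟩ := pairing S T
  obtain ⟨W, hW⟩ := union P
  refine ⟨W, fun u => ⟨fun hu => ?_, ?_⟩⟩
  · obtain ⟨z, hzP, huz⟩ := (hW u).1 hu
    rcases (hP z).1 hzP with hz | hz
    · exact Or.inl ((hz u).1 huz)
    · exact Or.inr (((hT u).1 ((hz u).1 huz)).elim id id)
  · rintro (hu | hu)
    · exact (hW u).2 ⟨S, (hP S).2 (Or.inl (eqE_refl S)), hu⟩
    · exact (hW u).2 ⟨T, (hP T).2 (Or.inr (eqE_refl T)), (hT u).2 (Or.inl hu)⟩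

theorem not_mem_self_of_isUpperBound (subst : ∀ s t v, eqE mem s t → mem t v → mem s v)
    (indiv : ∀ p s, mem s p → mem p p → eqE mem s p)
    {V n u : Obj} (hnV : mem n V) (hnn : ¬ mem n n) (hu : isUpperBound mem V u) :
    ¬ mem u u := by
  intro huu
  rcases hu n hnV with h | h
  · exact hnn ((indiv u n h huu n).2 h)
  · exact hnn (subst n u n h ((h u).2 huu))

theorem exists_minimal_isUpperBound (subst : ∀ s t v, eqE mem s t → mem t v → mem s v)
    (indiv : ∀ p s, mem s p → mem p p → eqE mem s p)
    (pairing : ∀ s t, ∃ v, ∀ u, mem u v ↔ (eqE mem u s ∨ eqE mem u t))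
    (union : ∀ s, ∃ v, isUnionOf mem v s)
    (regularity : ∀ s, (∃ v, mem v s ∧ ¬ mem v v) →
      ∃ v, mem v s ∧ ¬ mem v v ∧ ∀ u, mem u s → ¬ mem u u → ¬ mem u v)
    (spec : ∀ (Φ : Obj → Prop) (s : Obj), (∃ u, mem u s ∧ Φ u) →
      ∃ v, ∀ u, mem u v ↔ (mem u s ∧ Φ u))
    {V S n : Obj} (hnV : mem n V) (hnn : ¬ mem n n) (hVS : subE mem V S) :
    ∃ w, (mem w S ∨ eqE mem w S) ∧ isUpperBound mem V w ∧ ¬ mem w w ∧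
      ∀ u, (mem u S ∨ eqE mem u S) → isUpperBound mem V u → ¬ mem u w := by
  obtain ⟨W₀, hW₀⟩ := exists_isSuccOf pairing union S
  have hSW₀ : mem S W₀ := (hW₀ S).2 (Or.inr (eqE_refl S))
  have hSV : isUpperBound mem V S := fun v hv => Or.inl (hVS v hv)
  obtain ⟨W, hW⟩ := spec (isUpperBound mem V) W₀ ⟨S, hSW₀, hSV⟩
  have hW_irrefl : ∀ u, mem u W → ¬ mem u u := fun u hu =>
    not_mem_self_of_isUpperBound subst indiv hnV hnn ((hW u).1 hu).2
  obtain ⟨w, hwW, hww, hmin⟩ :=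
    regularity W ⟨S, (hW S).2 ⟨hSW₀, hSV⟩, hW_irrefl S ((hW S).2 ⟨hSW₀, hSV⟩)⟩
  obtain ⟨hwW₀, hwV⟩ := (hW w).1 hwW
  refine ⟨w, (hW₀ w).1 hwW₀, hwV, hww, fun u huS huV => ?_⟩
  have huW : mem u W := (hW u).2 ⟨(hW₀ u).2 huS, huV⟩
  exact hmin u huW (hW_irrefl u huW)

theorem exists_eqE_of_minimal_isUpperBound (subst : ∀ s t v, eqE mem s t → mem t v → mem s v)
    (indiv : ∀ p s, mem s p → mem p p → eqE mem s p)
    {α S V n w : Obj} (hα : ∀ x, mem x α → mem x x) (hS : isNat mem α S)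
    (hnV : mem n V) (hnα : ¬ mem n α)
    (hwS : mem w S ∨ eqE mem w S) (hwV : isUpperBound mem V w) (hww : ¬ mem w w)
    (hmin : ∀ u, (mem u S ∨ eqE mem u S) → isUpperBound mem V u → ¬ mem u w) :
    ∃ v, mem v V ∧ eqE mem v w := by
  rcases hS.2 w hwS with (hwα | hwα) | ⟨-, U, -, hsucc⟩
  · exact absurd (hα w hwα) hww
  · exact ⟨n, hnV, (hwV n hnV).resolve_left fun hnw => hnα ((hwα n).1 hnw)⟩
  · by_contra hnot
    have hUw : mem U w := (hsucc U).2 (Or.inr (eqE_refl U))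
    have hUS : mem U S := by
      rcases hwS with hwS | hwS
      · exact isTransitive_of_mem_succ_of_isNat subst indiv hα hS (Or.inr (eqE_refl S))
          w hwS U hUw
      · exact (hwS U).1 hUw
    have hUV : isUpperBound mem V U := fun v hv =>
      (hsucc v).1 ((hwV v hv).resolve_right fun hvw => hnot ⟨v, hv, hvw⟩)
    exact hmin U (Or.inl hUS) hUV hUw

theorem not_mem_of_isUpperBound {V w u : Obj} (hw : isTransitive mem w) (hww : ¬ mem w w)
    (hwV : isUpperBound mem V w) (huV : mem u V) : ¬ mem w u := fun hwu =>
  (hwV u huV).elim (fun huw => hww (hw u huw w hwu)) fun huw => hww ((huw w).1 hwu)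

theorem eqE_of_isUnionOf_of_isUpperBound {V w UV : Obj} (hw : isTransitive mem w)
    (hwV : isUpperBound mem V w) (hwmem : mem w V) (hUV : isUnionOf mem UV V) :
    eqE mem UV w := fun u =>
  ⟨fun hu => by
    obtain ⟨z, hzV, huz⟩ := (hUV u).1 hu
    exact (hwV z hzV).elim (fun hzw => hw z hzw u huz) fun hzw => (hzw u).1 huz,
   fun hu => (hUV u).2 ⟨w, hwmem, hu⟩⟩

end

theorem union_greatest_general {Obj : Type} (mem : Obj → Obj → Prop)
    (subst : ∀ s t v, eqE mem s t → mem t v → mem s v)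
    (indiv : ∀ p s, mem s p → mem p p → eqE mem s p)
    (pairing : ∀ s t, ∃ v, ∀ u, mem u v ↔ (eqE mem u s ∨ eqE mem u t))
    (union : ∀ s, ∃ v, isUnionOf mem v s)
    (regularity : ∀ s, (∃ v, mem v s ∧ ¬ mem v v) →
      ∃ v, mem v s ∧ ¬ mem v v ∧ ∀ u, mem u s → ¬ mem u u → ¬ mem u v)
    (spec : ∀ (Φ : Obj → Prop) (s : Obj), (∃ u, mem u s ∧ Φ u) →
      ∃ v, ∀ u, mem u v ↔ (mem u s ∧ Φ u))
    (p q α : Obj) (hp : mem p p) (hq : mem q q)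
    (hα : ∀ u, mem u α ↔ (eqE mem u p ∨ eqE mem u q))
    (V S UV : Obj)
    (hmem : ∃ n, mem n V ∧ isNat mem α n)
    (hVS : subE mem V S) (hS : isNat mem α S)
    (hUV : isUnionOf mem UV V) :
    mem UV V ∧ ∀ u, mem u V → ¬ mem UV u := by
  obtain ⟨n, hnV, hn⟩ := hmem
  have hα_self : ∀ x, mem x α → mem x x := fun _ => mem_self_of_mem_pair subst hp hq hα
  have hpα : mem p α := (hα p).2 (Or.inl (eqE_refl p))
  obtain ⟨w, hwS, hwV, hww, hmin⟩ := exists_minimal_isUpperBound subst indiv pairing union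
    regularity spec hnV (not_mem_self_of_isNat subst indiv hpα hn) hVS
  obtain ⟨v, hvV, hvw⟩ :=
    exists_eqE_of_minimal_isUpperBound subst indiv hα_self hS hnV hn.1 hwS hwV hww hmin
  have hwmem : mem w V := subst w v V (eqE_symm hvw) hvV
  have hw_trans := isTransitive_of_mem_succ_of_isNat subst indiv hα_self hS hwS
  have hUVw := eqE_of_isUnionOf_of_isUpperBound hw_trans hwV hwmem hUV
  exact ⟨subst UV w V hUVw hwmem, fun u huV hUVu =>
    not_mem_of_isUpperBound hw_trans hww hwV huV (subst w UV u (eqE_symm hUVw) hUVu)⟩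

/-- If a natural number belongs to V, every member of V is a natural number,
V ⊆ S and S is a natural number, then ⋃V is the greatest number in V. -/
theorem union_greatest {Obj : Type} (mem : Obj → Obj → Prop)
    (subst : ∀ s t v, eqE mem s t → mem t v → mem s v)
    (indiv : ∀ p s, mem s p → mem p p → eqE mem s p)
    (pairing : ∀ s t, ∃ v, ∀ u, mem u v ↔ (eqE mem u s ∨ eqE mem u t))
    (union : ∀ s, ∃ v, isUnionOf mem v s)
    (regularity : ∀ s, (∃ v, mem v s ∧ ¬ mem v v) →
      ∃ v, mem v s ∧ ¬ mem v v ∧ ∀ u, mem u s → ¬ mem u u → ¬ mem u v)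
    (spec : ∀ (Φ : Obj → Prop) (s : Obj), (∃ u, mem u s ∧ Φ u) →
      ∃ v, ∀ u, mem u v ↔ (mem u s ∧ Φ u))
    (nonemptyAx : ∀ t : Obj, ∃ u, mem u t)
    (p q α : Obj) (hp : mem p p) (hq : mem q q)
    (hα : ∀ u, mem u α ↔ (eqE mem u p ∨ eqE mem u q))
    (V S UV : Obj)
    (hmem : ∃ n, mem n V ∧ isNat mem α n)
    (hall : ∀ u, mem u V → isNat mem α u)
    (hVS : subE mem V S) (hS : isNat mem α S)
    (hUV : isUnionOf mem UV V) :
    mem UV V ∧ ∀ u, mem u V → ¬ mem UV u :=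
  union_greatest_general mem subst indiv pairing union regularity spec p q α hp hq hα V S UV hmem
    hVS hS hUV
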